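/- Let V = ℂ³ with Hermitian form of signature (-,+,+), let W ⊆ V be a real 2-dimensional subspace on which the form is real-valued with signature (-,+), and let u be a unit vector orthogonal to W + iW. Then for every x ∈ W with ⟨x,x⟩ < 0, the complex 2-dimensional subspace ℂx + ℂu has Hermitian form of signature (-,+); i.e., each slice of the bisector with real spine defined by W is a complex geodesic. -/

import Mathlib

/-!
A vector `x` of negative norm that is orthogonal to a unit vector `u` already spans, together
with `u`, a plane of signature `(-,+)`: since the form is Hermitian, `⟨x,x⟩` is real, so
`x / √(-⟨x,x⟩), u` is an orthonormal basis of `ℂx + ℂu` with signs `-,+`. Orthogonality of `x`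
and `u` comes from `x ∈ W` and `u ⟂ W`.
-/

/-- The Hermitian form of signature `(-,+,+)` on `ℂ³`. -/
noncomputable def herm (x y : Fin 3 → ℂ) : ℂ :=
  -(x 0 * star (y 0)) + x 1 * star (y 1) + x 2 * star (y 2)

lemma herm_smul_left (c : ℂ) (x y : Fin 3 → ℂ) : herm (c • x) y = c * herm x y := by
  simp only [herm, Pi.smul_apply, smul_eq_mul]; ring

lemma herm_smul_right (c : ℂ) (x y : Fin 3 → ℂ) : herm x (c • y) = star c * herm x y := by
  simp only [herm, Pi.smul_apply, smul_eq_mul, star_mul']; ring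

lemma herm_add_right (x y z : Fin 3 → ℂ) : herm x (y + z) = herm x y + herm x z := by
  simp only [herm, Pi.add_apply, star_add]; ring

lemma herm_conj (x y : Fin 3 → ℂ) : herm y x = star (herm x y) := by
  simp only [herm, star_add, star_mul', star_neg, star_star]; ring

lemma herm_self_re (x : Fin 3 → ℂ) : ((herm x x).re : ℂ) = herm x x :=
  Complex.conj_eq_iff_re.mp (herm_conj x x).symm

lemma herm_eq_zero_of_eq_smul_add_smul {u w₁ w₂ x : Fin 3 → ℂ} (a b : ℂ)
    (hx : x = a • w₁ + b • w₂) (hu1 : herm u w₁ = 0) (hu2 : herm u w₂ = 0) :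
    herm x u = 0 := by
  rw [herm_conj, hx, herm_add_right, herm_smul_right, herm_smul_right, hu1, hu2]
  simp

lemma exists_smul_herm_self_eq_neg_one {x : Fin 3 → ℂ} (hneg : (herm x x).re < 0) :
    ∃ c : ℂ, c ≠ 0 ∧ herm (c • x) (c • x) = -1 := by
  set s := Real.sqrt (-(herm x x).re)
  have hs : s ^ 2 = -(herm x x).re := Real.sq_sqrt (by linarith)
  have hs0 : s ≠ 0 := (Real.sqrt_pos.mpr (by linarith)).ne'
  refine ⟨(s : ℂ)⁻¹, by simpa using hs0, ?_⟩
  have hre : s⁻¹ * (s⁻¹ * (herm x x).re) = -1 := by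
    rw [← mul_assoc, ← mul_inv, ← sq, hs]
    field_simp [hneg.ne]
  rw [herm_smul_left, herm_smul_right, ← herm_self_re, Complex.star_def, ← Complex.ofReal_inv,
    Complex.conj_ofReal]
  exact_mod_cast hre

lemma span_pair_smul_left {K V : Type*} [DivisionRing K] [AddCommGroup V] [Module K V]
    {c : K} (hc : c ≠ 0) (x u : V) :
    Submodule.span K ({c • x, u} : Set V) = Submodule.span K {x, u} := by
  rw [Submodule.span_insert, Submodule.span_insert,
    Submodule.span_singleton_smul_eq hc.isUnit]

theorem stmt_17_general (w₁ w₂ u : Fin 3 → ℂ)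
    (huu : herm u u = 1) (hu1 : herm u w₁ = 0) (hu2 : herm u w₂ = 0)
    (a b : ℝ) (x : Fin 3 → ℂ) (hx : x = (a : ℂ) • w₁ + (b : ℂ) • w₂)
    (hneg : (herm x x).re < 0) :
    ∃ f₁ f₂ : Fin 3 → ℂ,
      Submodule.span ℂ ({x, u} : Set (Fin 3 → ℂ)) =
        Submodule.span ℂ ({f₁, f₂} : Set (Fin 3 → ℂ)) ∧
      herm f₁ f₁ = -1 ∧ herm f₂ f₂ = 1 ∧ herm f₁ f₂ = 0 := by
  obtain ⟨c, hc, hcx⟩ := exists_smul_herm_self_eq_neg_one hneg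
  have hxu : herm x u = 0 := herm_eq_zero_of_eq_smul_add_smul _ _ hx hu1 hu2
  refine ⟨c • x, u, (span_pair_smul_left hc x u).symm, hcx, huu, ?_⟩
  rw [herm_smul_left, hxu, mul_zero]

/-- Every slice `ℂx + ℂu` of a bisector is a complex geodesic: the complex
2-dimensional subspace has signature `(-,+)`.  The real spine subspace `W`
is spanned over `ℝ` by an orthonormal basis `w₁, w₂` with signs `-,+`, and
`u` is a unit vector orthogonal to `W + iW`. -/
theorem stmt_17 (w₁ w₂ u : Fin 3 → ℂ)
    (h11 : herm w₁ w₁ = -1) (h22 : herm w₂ w₂ = 1) (h12 : herm w₁ w₂ = 0)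
    (huu : herm u u = 1) (hu1 : herm u w₁ = 0) (hu2 : herm u w₂ = 0)
    (a b : ℝ) (x : Fin 3 → ℂ) (hx : x = (a : ℂ) • w₁ + (b : ℂ) • w₂)
    (hneg : (herm x x).re < 0) :
    ∃ f₁ f₂ : Fin 3 → ℂ,
      Submodule.span ℂ ({x, u} : Set (Fin 3 → ℂ)) =
        Submodule.span ℂ ({f₁, f₂} : Set (Fin 3 → ℂ)) ∧
      herm f₁ f₁ = -1 ∧ herm f₂ f₂ = 1 ∧ herm f₁ f₂ = 0 :=
  stmt_17_general w₁ w₂ u huu hu1 hu2 a b x hx hneg
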